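/- Let a, p be reals with 0 < a \leq p. Then \int_0^\infty ( e^{-u}/(u(1-e^{-pu/a})) - (a/p)u^{-2} - (1/2 - a/p) e^{-u}/u ) du = \log\Gamma(a/p) + (1/2 - a/p)\log(a/p) - (1/2)\log(2\pi). -/

import Mathlib

/-!
After the substitution `u = x v` with `x = a / p`, the integral becomes
`J x = ∫₀^∞ (e^{-xv} / (v (1 - e^{-v})) - v⁻² - (1/2 - x) e^{-xv} / v) dv`.
Removing the derivative of `(1 - e^{-xv}) / v` (whose integral is `-x`) leaves `e^{-xv}` times
Binet's bounded kernel `(1 / (1 - e^{-v}) - 1 / v - 1 / 2) / v`, so `J x + x = O(1 / x)`.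
By Frullani's integral, `J x - J (x + 1) = (x + 1/2) log (1 + 1/x)`, so
`L x = J x + (x - 1/2) log x + log (2π) / 2` satisfies `L (x + 1) = L x + log x`; together with
Stirling's formula for `n!` this shows that `L x` is the limit of Gauss's sequence for `log Γ(x)`.
-/

open Real MeasureTheory Set Filter Topology

noncomputable section

namespace Binet

def kernel (v : ℝ) : ℝ := (1 / (1 - exp (-v)) - 1 / v - 1 / 2) / v

lemma one_sub_exp_neg_pos {v : ℝ} (hv : 0 < v) : 0 < 1 - exp (-v) := by
  linarith [exp_lt_one_iff.2 (neg_lt_zero.2 hv)]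

lemma continuousOn_kernel : ContinuousOn kernel (Ioi 0) := by
  have h1 : ∀ v ∈ Ioi (0 : ℝ), 1 - exp (-v) ≠ 0 := fun v hv => (one_sub_exp_neg_pos hv).ne'
  have h2 : ∀ v ∈ Ioi (0 : ℝ), v ≠ 0 := fun v hv => ne_of_gt hv
  unfold kernel
  fun_prop (disch := assumption)

lemma abs_kernel_le_of_le_one {v : ℝ} (hv : 0 < v) (hv1 : v ≤ 1) : |kernel v| ≤ 2 := by
  have hE : |exp (-v) - (1 + -v + v ^ 2 / 2)| ≤ v ^ 3 * (2 / 9) := by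
    have := Real.exp_bound (x := -v) (by rwa [abs_neg, abs_of_pos hv]) (n := 3) (by norm_num)
    norm_num [Finset.sum_range_succ, Nat.factorial, abs_of_pos hv] at this
    exact this
  have hE1 : (1 + v) * exp (-v) ≤ 1 := by
    have := add_one_le_exp v
    calc (1 + v) * exp (-v) ≤ exp v * exp (-v) := by gcongr; linarith
      _ = 1 := by rw [← exp_add, add_neg_cancel, exp_zero]
  have hD : 0 < 1 - exp (-v) := one_sub_exp_neg_pos hv
  -- the numerator is `v³ / 12 + O(v⁴)`
  have hk : kernel v = (v * (1 + exp (-v)) / 2 - (1 - exp (-v))) / (v ^ 2 * (1 - exp (-v))) := by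
    unfold kernel; field_simp; ring
  have hden : 0 < v ^ 2 * (1 - exp (-v)) := by positivity
  rw [hk, abs_div, abs_of_pos hden, div_le_iff₀ hden, abs_le]
  rw [abs_le] at hE
  constructor <;> nlinarith [pow_pos hv 3, mul_le_mul_of_nonneg_left hv1 (pow_pos hv 3).le]

lemma abs_kernel_le_of_one_le {v : ℝ} (hv : 1 ≤ v) : |kernel v| ≤ 2 := by
  have hE : exp (-v) ≤ 1 / 2 := by
    have := exp_one_gt_d9
    calc exp (-v) ≤ exp (-1) := exp_le_exp.2 (by linarith)
      _ ≤ 1 / 2 := by rw [exp_neg, inv_le_comm₀ (exp_pos 1) (by norm_num)]; linarith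
  have hw : 1 ≤ 1 / (1 - exp (-v)) ∧ 1 / (1 - exp (-v)) ≤ 2 := by
    have := exp_pos (-v)
    constructor
    · rw [le_div_iff₀ (by linarith)]; linarith
    · rw [div_le_iff₀ (by linarith)]; linarith
  have hv' : 0 < 1 / v ∧ 1 / v ≤ 1 :=
    ⟨by positivity, by rw [div_le_iff₀ (by linarith)]; linarith⟩
  unfold kernel
  rw [abs_div, abs_of_pos (a := v) (by linarith), div_le_iff₀ (by linarith), abs_le]
  constructor <;> nlinarith

lemma abs_kernel_le {v : ℝ} (hv : 0 < v) : |kernel v| ≤ 2 :=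
  (le_total v 1).elim (abs_kernel_le_of_le_one hv) abs_kernel_le_of_one_le

lemma integrableOn_exp_neg_mul_kernel {x : ℝ} (hx : 0 < x) :
    IntegrableOn (fun v => exp (-x * v) * kernel v) (Ioi 0) := by
  refine Integrable.mono' ((exp_neg_integrableOn_Ioi 0 hx).const_mul 2)
    (((continuous_exp.comp (continuous_const_mul _)).continuousOn.mul
      continuousOn_kernel).aestronglyMeasurable measurableSet_Ioi) ?_
  filter_upwards [ae_restrict_mem measurableSet_Ioi] with v hv
  rw [norm_mul, norm_of_nonneg (exp_pos _).le, mul_comm]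
  exact mul_le_mul_of_nonneg_right (abs_kernel_le hv) (exp_pos _).le

lemma integral_exp_neg_mul_Ioi_zero {x : ℝ} (hx : 0 < x) :
    ∫ v in Ioi 0, exp (-x * v) = 1 / x := by
  rw [integral_exp_mul_Ioi (neg_lt_zero.2 hx)]
  simp [neg_div]

lemma abs_integral_exp_neg_mul_kernel_le {x : ℝ} (hx : 0 < x) :
    |∫ v in Ioi 0, exp (-x * v) * kernel v| ≤ 2 / x := by
  rw [← Real.norm_eq_abs]
  calc ‖∫ v in Ioi 0, exp (-x * v) * kernel v‖
      ≤ ∫ v in Ioi 0, 2 * exp (-x * v) := by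
        refine norm_integral_le_of_norm_le ((exp_neg_integrableOn_Ioi 0 hx).const_mul 2) ?_
        filter_upwards [ae_restrict_mem measurableSet_Ioi] with v hv
        rw [norm_mul, norm_of_nonneg (exp_pos _).le, mul_comm]
        exact mul_le_mul_of_nonneg_right (abs_kernel_le hv) (exp_pos _).le
    _ = 2 / x := by rw [integral_const_mul, integral_exp_neg_mul_Ioi_zero hx]; ring

def oneSubExpDiv (x : ℝ) : ℝ → ℝ := dslope (fun t => 1 - exp (-x * t)) 0

lemma hasDerivAt_oneSubExpDiv (x : ℝ) {v : ℝ} (hv : v ≠ 0) :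
    HasDerivAt (oneSubExpDiv x) (((1 + x * v) * exp (-x * v) - 1) / v ^ 2) v := by
  have hf : HasDerivAt (fun t => (1 - exp (-x * t)) / t)
      (((1 + x * v) * exp (-x * v) - 1) / v ^ 2) v := by
    refine ((((hasDerivAt_id' v).const_mul (-x)).exp.const_sub 1).div (hasDerivAt_id' v)
      hv).congr_deriv ?_
    field_simp
    ring
  refine hf.congr_of_eventuallyEq ?_
  filter_upwards [eventually_ne_nhds hv] with t ht
  simp [oneSubExpDiv, dslope_of_ne _ ht, slope_def_field, div_eq_inv_mul]

lemma oneSubExpDiv_zero (x : ℝ) : oneSubExpDiv x 0 = x := by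
  refine (dslope_same _ _).trans (HasDerivAt.deriv ?_)
  refine (((hasDerivAt_id' (0 : ℝ)).const_mul (-x)).exp.const_sub 1).congr_deriv ?_
  simp

lemma continuousAt_oneSubExpDiv_zero (x : ℝ) : ContinuousAt (oneSubExpDiv x) 0 :=
  continuousAt_dslope_same.2 (by fun_prop)

lemma tendsto_oneSubExpDiv_atTop {x : ℝ} (hx : 0 < x) :
    Tendsto (oneSubExpDiv x) atTop (𝓝 0) := by
  have : Tendsto (fun v => (1 - exp (-x * v)) * v⁻¹) atTop (𝓝 ((1 - 0) * 0)) :=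
    ((tendsto_exp_atBot.comp (tendsto_id.const_mul_atTop_of_neg (neg_lt_zero.2 hx))).const_sub
      1).mul tendsto_inv_atTop_zero
  rw [sub_zero, mul_zero] at this
  refine this.congr' ?_
  filter_upwards [eventually_gt_atTop 0] with v hv
  simp [oneSubExpDiv, dslope_of_ne _ hv.ne', slope_def_field, div_eq_mul_inv]

lemma add_one_mul_exp_neg_sub_one_div_sq_nonpos (x v : ℝ) :
    ((1 + x * v) * exp (-x * v) - 1) / v ^ 2 ≤ 0 := by
  refine div_nonpos_of_nonpos_of_nonneg ?_ (sq_nonneg v)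
  have := add_one_le_exp (x * v)
  have : (1 + x * v) * exp (-x * v) ≤ exp (x * v) * exp (-x * v) := by gcongr; linarith
  rw [← exp_add, show x * v + -x * v = 0 by ring, exp_zero] at this
  linarith

lemma integrableOn_deriv_oneSubExpDiv {x : ℝ} (hx : 0 < x) :
    IntegrableOn (fun v => ((1 + x * v) * exp (-x * v) - 1) / v ^ 2) (Ioi 0) :=
  integrableOn_Ioi_deriv_of_nonpos (continuousAt_oneSubExpDiv_zero x).continuousWithinAt
    (fun _ hv => hasDerivAt_oneSubExpDiv x (ne_of_gt hv))
    (fun v _ => add_one_mul_exp_neg_sub_one_div_sq_nonpos x v) (tendsto_oneSubExpDiv_atTop hx)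

lemma integral_deriv_oneSubExpDiv {x : ℝ} (hx : 0 < x) :
    ∫ v in Ioi 0, ((1 + x * v) * exp (-x * v) - 1) / v ^ 2 = -x := by
  rw [integral_Ioi_of_hasDerivAt_of_nonpos (continuousAt_oneSubExpDiv_zero x).continuousWithinAt
    (fun _ hv => hasDerivAt_oneSubExpDiv x (ne_of_gt hv))
    (fun v _ => add_one_mul_exp_neg_sub_one_div_sq_nonpos x v) (tendsto_oneSubExpDiv_atTop hx),
    oneSubExpDiv_zero, zero_sub]

def integrand (x v : ℝ) : ℝ :=
  exp (-x * v) / (v * (1 - exp (-v))) - v⁻¹ ^ 2 - (1 / 2 - x) * exp (-x * v) / v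

lemma integrand_eq {x v : ℝ} (hv : 0 < v) :
    integrand x v = exp (-x * v) * kernel v + ((1 + x * v) * exp (-x * v) - 1) / v ^ 2 := by
  have := (one_sub_exp_neg_pos hv).ne'
  unfold integrand kernel
  field_simp
  ring

lemma integrableOn_integrand {x : ℝ} (hx : 0 < x) : IntegrableOn (integrand x) (Ioi 0) :=
  ((integrableOn_exp_neg_mul_kernel hx).add (integrableOn_deriv_oneSubExpDiv hx)).congr_fun
    (fun _ hv => (integrand_eq hv).symm) measurableSet_Ioi

lemma integral_integrand_add_self {x : ℝ} (hx : 0 < x) :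
    (∫ v in Ioi 0, integrand x v) + x = ∫ v in Ioi 0, exp (-x * v) * kernel v := by
  rw [setIntegral_congr_fun measurableSet_Ioi (fun _ hv => integrand_eq hv),
    integral_add (integrableOn_exp_neg_mul_kernel hx) (integrableOn_deriv_oneSubExpDiv hx),
    integral_deriv_oneSubExpDiv hx, neg_add_cancel_right]

lemma tendsto_integral_integrand_add_self_atTop :
    Tendsto (fun x => (∫ v in Ioi 0, integrand x v) + x) atTop (𝓝 0) := by
  refine squeeze_zero_norm' ?_ ((tendsto_const_nhds (x := (2 : ℝ))).div_atTop tendsto_id)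
  filter_upwards [eventually_gt_atTop 0] with x hx
  rw [integral_integrand_add_self hx, Real.norm_eq_abs]
  exact abs_integral_exp_neg_mul_kernel_le hx

lemma integrableOn_exp_neg_mul_sub_div {a b : ℝ} (ha : 0 < a) (hab : a ≤ b) :
    IntegrableOn (fun v => (exp (-a * v) - exp (-b * v)) / v) (Ioi 0) := by
  refine Integrable.mono' ((exp_neg_integrableOn_Ioi 0 ha).const_mul (b - a))
    ((Continuous.continuousOn (by fun_prop)).div continuousOn_id (fun v hv => ne_of_gt hv)
      |>.aestronglyMeasurable measurableSet_Ioi) ?_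
  filter_upwards [ae_restrict_mem measurableSet_Ioi] with v (hv : 0 < v)
  have hsplit : exp (-a * v) - exp (-b * v) = exp (-a * v) * (1 - exp (-((b - a) * v))) := by
    rw [mul_sub, mul_one, ← exp_add]; ring_nf
  have h1 : 0 ≤ 1 - exp (-((b - a) * v)) := by
    have := exp_le_one_iff.2 (neg_nonpos.2 (mul_nonneg (sub_nonneg.2 hab) hv.le)); linarith
  have h2 : 1 - exp (-((b - a) * v)) ≤ (b - a) * v := by
    linarith [add_one_le_exp (-((b - a) * v))]
  rw [norm_div, norm_of_nonneg (by rw [hsplit]; positivity), norm_of_nonneg hv.le, div_le_iff₀ hv,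
    hsplit]
  nlinarith [exp_pos (-a * v)]

lemma integral_exp_neg_mul_sub_div {a b : ℝ} (ha : 0 < a) (hab : a ≤ b) :
    ∫ v in Ioi 0, (exp (-a * v) - exp (-b * v)) / v = log (b / a) := by
  have hf := Frullani.integral_Ioi_eq (f := fun t => exp (-t))
    ((continuous_exp.comp continuous_neg).locallyIntegrable.locallyIntegrableOn _) ha
    (ha.trans_le hab)
    (((by fun_prop : Continuous fun t : ℝ => exp (-t)).tendsto' 0 1 (by simp)).mono_left
      nhdsWithin_le_nhds)
    tendsto_exp_neg_atTop_nhds_zero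
    (by simpa [div_eq_inv_mul, neg_mul] using integrableOn_exp_neg_mul_sub_div ha hab)
  simpa [div_eq_inv_mul, neg_mul] using hf

lemma integrand_sub_integrand_add_one (x : ℝ) {v : ℝ} (hv : 0 < v) :
    integrand x v - integrand (x + 1) v =
      (x + 1 / 2) * ((exp (-x * v) - exp (-(x + 1) * v)) / v) := by
  have := (one_sub_exp_neg_pos hv).ne'
  have hexp : exp (-(x + 1) * v) = exp (-x * v) * exp (-v) := by rw [← exp_add]; ring_nf
  unfold integrand
  rw [hexp]
  field_simp
  ring

lemma integral_integrand_sub_integral_integrand_add_one {x : ℝ} (hx : 0 < x) :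
    (∫ v in Ioi 0, integrand x v) - ∫ v in Ioi 0, integrand (x + 1) v =
      (x + 1 / 2) * log ((x + 1) / x) := by
  rw [← integral_sub (integrableOn_integrand hx) (integrableOn_integrand (by linarith)),
    setIntegral_congr_fun measurableSet_Ioi (fun _ hv => integrand_sub_integrand_add_one x hv),
    integral_const_mul, integral_exp_neg_mul_sub_div hx (by linarith)]

def logGamma (x : ℝ) : ℝ :=
  (∫ v in Ioi 0, integrand x v) + (x - 1 / 2) * log x + log (2 * π) / 2

lemma logGamma_add_one {x : ℝ} (hx : 0 < x) : logGamma (x + 1) = logGamma x + log x := by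
  have h := integral_integrand_sub_integral_integrand_add_one hx
  rw [log_div (by linarith) hx.ne'] at h
  unfold logGamma
  linear_combination -h

lemma tendsto_log_factorial_sub_stirling :
    Tendsto (fun n : ℕ => log n.factorial - ((n + 1 / 2) * log n - n)) atTop
      (𝓝 (log (2 * π) / 2)) := by
  have hlim := ((continuousAt_log (by positivity : √π ≠ 0)).tendsto.comp
    Stirling.tendsto_stirlingSeq_sqrt_pi).add_const (log 2 / 2)
  rw [log_sqrt pi_pos.le, ← add_div, add_comm, ← log_mul two_ne_zero pi_ne_zero] at hlim
  refine hlim.congr' ?_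
  filter_upwards [eventually_gt_atTop 0] with n hn
  have hn : (n : ℝ) ≠ 0 := by positivity
  rw [Function.comp_apply, Stirling.log_stirlingSeq_formula, log_mul two_ne_zero hn,
    log_div hn (exp_pos 1).ne', log_exp]
  ring

lemma tendsto_add_mul_log_one_add_div (c d : ℝ) :
    Tendsto (fun n : ℕ => (n + c) * log (1 + d / n)) atTop (𝓝 d) := by
  have h1 : Tendsto (fun n : ℕ => log (1 + d / n)) atTop (𝓝 0) := by
    have := (tendsto_const_div_atTop_nhds_zero_nat d).const_add 1
    rw [add_zero] at this
    rw [← log_one]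
    exact (continuousAt_log one_ne_zero).tendsto.comp this
  have h2 : Tendsto (fun n : ℕ => n * log (1 + d / n)) atTop (𝓝 d) := by
    have := (continuousAt_log (exp_pos d).ne').tendsto.comp (tendsto_one_add_div_pow_exp d)
    rw [log_exp] at this
    exact this.congr fun n => by simp [Function.comp_apply, log_pow]
  simpa [add_mul] using h2.add (h1.const_mul c)

lemma tendsto_logGamma_add_nat_sub {x : ℝ} (hx : 0 < x) :
    Tendsto (fun n : ℕ => logGamma (x + (n + 1 : ℕ)) - (x * log n + log n.factorial)) atTop
      (𝓝 0) := by
  have hy : Tendsto (fun n : ℕ => x + ((n + 1 : ℕ) : ℝ)) atTop atTop :=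
    tendsto_atTop_add_const_left _ x (tendsto_natCast_atTop_atTop.comp (tendsto_add_atTop_nat 1))
  have hlim := ((tendsto_integral_integrand_add_self_atTop.comp hy).add
    ((tendsto_add_mul_log_one_add_div (x + 1 / 2) (x + 1)).sub_const (x + 1))).sub
    (tendsto_log_factorial_sub_stirling.sub_const (log (2 * π) / 2))
  rw [sub_self, sub_self, add_zero, sub_zero] at hlim
  refine hlim.congr' ?_
  filter_upwards [eventually_gt_atTop 0] with n hn
  have hn : (0 : ℝ) < n := by exact_mod_cast hn
  have hxn : x + ((n + 1 : ℕ) : ℝ) = n * (1 + (x + 1) / n) := by field_simp; push_cast; ring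
  have hlog : log (x + ((n + 1 : ℕ) : ℝ)) = log n + log (1 + (x + 1) / n) := by
    rw [hxn, log_mul hn.ne' (by positivity)]
  simp only [Function.comp_apply, logGamma, hlog]
  push_cast
  ring

lemma logGamma_eq_log_Gamma {x : ℝ} (hx : 0 < x) : logGamma x = log (Gamma x) := by
  refine tendsto_nhds_unique ?_ (Real.BohrMollerup.tendsto_log_gamma hx)
  have := (tendsto_logGamma_add_nat_sub hx).const_sub (logGamma x)
  rw [sub_zero] at this
  refine this.congr fun n => ?_
  rw [Real.BohrMollerup.f_add_nat_eq (fun hy => logGamma_add_one hy) hx,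
    Real.BohrMollerup.logGammaSeq]
  ring

lemma integral_integrand {x : ℝ} (hx : 0 < x) :
    ∫ v in Ioi 0, integrand x v = log (Gamma x) + (1 / 2 - x) * log x - 1 / 2 * log (2 * π) := by
  rw [← logGamma_eq_log_Gamma hx, logGamma]
  ring

end Binet

end

/-- Binet-type integral: for reals `0 < a ≤ p`,
`∫₀^∞ (e^{-u}/(u(1-e^{-pu/a})) - (a/p)u⁻² - (1/2 - a/p)e^{-u}/u) du
  = log Γ(a/p) + (1/2 - a/p) log(a/p) - (1/2) log(2π)`. -/
theorem binet_type_integral (a p : ℝ) (ha : 0 < a) (hap : a ≤ p) :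
    ∫ u in Set.Ioi (0 : ℝ),
        (Real.exp (-u) / (u * (1 - Real.exp (-p * u / a))) - (a / p) * u⁻¹ ^ 2 -
          (1 / 2 - a / p) * Real.exp (-u) / u) =
      Real.log (Real.Gamma (a / p)) + (1 / 2 - a / p) * Real.log (a / p) -
        (1 / 2) * Real.log (2 * Real.pi) := by
  have hp : 0 < p := ha.trans_le hap
  have hx : 0 < a / p := div_pos ha hp
  rw [← mul_zero (a / p), ← integral_comp_mul_left_Ioi' _ 0 hx, smul_eq_mul,
    ← integral_const_mul]
  refine (setIntegral_congr_fun measurableSet_Ioi fun v (hv : 0 < v) => ?_).trans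
    (Binet.integral_integrand hx)
  have hv' : -p * (a / p * v) / a = -v := by field_simp
  have := (Binet.one_sub_exp_neg_pos hv).ne'
  rw [hv', Binet.integrand]
  field_simp
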